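/- The two 4-point configurations in R^2 given by P1=(0,0), P2=(0,6), P3=(6*sqrt(2),0), P4=(2*sqrt(2),-1) and Q1=(0,0), Q2=(0,6), Q3=(6*sqrt(2),0), Q4=(2*sqrt(2),5) have the same multiset of pairwise squared distances and the same multiset of squared signed areas of their four triangles, yet there is no Euclidean isometry of R^2 together with a permutation of indices carrying one configuration onto the other. -/

import Mathlib

/-!
All squared distances and squared doubled areas are integers, so both multiset identities
are finite computations. Congruence fails because an isometry composed with a relabelling
carries the distances from a point to the others onto those of its image: `Q 0` sees the
other points of `Q` at squared distances 36, 72, 33, and no point of `P` sees all three.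
-/

/-- The multiset of squared pairwise distances. -/
noncomputable def sqDistMultiset {n : ℕ} (P : Fin n → EuclideanSpace ℝ (Fin 2)) : Multiset ℝ :=
  ((Finset.univ : Finset (Fin n × Fin n)).filter fun p => p.1 < p.2).val.map
    fun p => dist (P p.1) (P p.2) ^ 2

/-- Twice the signed area of the triangle `P i`, `P j`, `P k`. -/
noncomputable def signedArea {n : ℕ} (P : Fin n → EuclideanSpace ℝ (Fin 2))
    (i j k : Fin n) : ℝ :=
  (P j 0 - P i 0) * (P k 1 - P i 1) - (P j 1 - P i 1) * (P k 0 - P i 0)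

/-- The multiset of squared signed areas of all triangles `i < j < k`. -/
noncomputable def sqAreaMultiset {n : ℕ} (P : Fin n → EuclideanSpace ℝ (Fin 2)) : Multiset ℝ :=
  ((Finset.univ : Finset (Fin n × Fin n × Fin n)).filter
      fun p => p.1 < p.2.1 ∧ p.2.1 < p.2.2).val.map
    fun p => signedArea P p.1 p.2.1 p.2.2 ^ 2

theorem EuclideanSpace.dist_sq_eq_fin_two (x y : EuclideanSpace ℝ (Fin 2)) :
    dist x y ^ 2 = (x 0 - y 0) ^ 2 + (x 1 - y 1) ^ 2 := by
  rw [EuclideanSpace.dist_eq, Real.sq_sqrt (by positivity)]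
  simp [Fin.sum_univ_two, Real.dist_eq, sq_abs]

theorem sqDistMultiset_eq_map_natCast {n : ℕ} (P : Fin n → EuclideanSpace ℝ (Fin 2))
    (D : Fin n → Fin n → ℕ) (hD : ∀ i j, dist (P i) (P j) ^ 2 = D i j) :
    sqDistMultiset P =
      (((Finset.univ : Finset (Fin n × Fin n)).filter fun p => p.1 < p.2).val.map
        fun p => D p.1 p.2).map Nat.cast := by
  simp [sqDistMultiset, Multiset.map_map, hD]

theorem sqAreaMultiset_fin_four (P : Fin 4 → EuclideanSpace ℝ (Fin 2)) :
    sqAreaMultiset P = {signedArea P 0 1 2 ^ 2, signedArea P 0 1 3 ^ 2,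
      signedArea P 0 2 3 ^ 2, signedArea P 1 2 3 ^ 2} := by
  have : ((Finset.univ : Finset (Fin 4 × Fin 4 × Fin 4)).filter
      fun p => p.1 < p.2.1 ∧ p.2.1 < p.2.2).val = {(0, 1, 2), (0, 1, 3), (0, 2, 3), (1, 2, 3)} := by
    decide
  rw [sqAreaMultiset, this]
  rfl

theorem not_exists_isometry_perm_of_forall_exists_dist_ne {ι E : Type*} [PseudoMetricSpace E]
    (P Q : ι → E) (i₀ : ι) (h : ∀ a, ∃ j, ∀ b, dist (P a) (P b) ≠ dist (Q i₀) (Q j)) :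
    ¬ ∃ (g : E ≃ᵢ E) (π : Equiv.Perm ι), ∀ i, g (P (π i)) = Q i := by
  rintro ⟨g, π, hg⟩
  obtain ⟨j, hj⟩ := h (π i₀)
  exact hj (π j) (by rw [← hg i₀, ← hg j, g.dist_eq])

noncomputable def configP : Fin 4 → EuclideanSpace ℝ (Fin 2) :=
  ![!₂[0,0], !₂[0,6], !₂[6 * Real.sqrt 2, 0], !₂[2 * Real.sqrt 2, -1]]

noncomputable def configQ : Fin 4 → EuclideanSpace ℝ (Fin 2) :=
  ![!₂[0,0], !₂[0,6], !₂[6 * Real.sqrt 2, 0], !₂[2 * Real.sqrt 2, 5]]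

def sqDistTableP : Fin 4 → Fin 4 → ℕ :=
  ![![0, 36, 72, 9], ![36, 0, 108, 57], ![72, 108, 0, 33], ![9, 57, 33, 0]]

def sqDistTableQ : Fin 4 → Fin 4 → ℕ :=
  ![![0, 36, 72, 33], ![36, 0, 108, 9], ![72, 108, 0, 57], ![33, 9, 57, 0]]

theorem dist_configP_sq (i j : Fin 4) :
    dist (configP i) (configP j) ^ 2 = sqDistTableP i j := by
  fin_cases i <;> fin_cases j <;>
    simp [configP, sqDistTableP, EuclideanSpace.dist_sq_eq_fin_two] <;> ring_nf <;> norm_num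

theorem dist_configQ_sq (i j : Fin 4) :
    dist (configQ i) (configQ j) ^ 2 = sqDistTableQ i j := by
  fin_cases i <;> fin_cases j <;>
    simp [configQ, sqDistTableQ, EuclideanSpace.dist_sq_eq_fin_two] <;> ring_nf <;> norm_num

theorem sqAreaMultiset_configP : sqAreaMultiset configP = {2592, 288, 72, 1800} := by
  simp [sqAreaMultiset_fin_four, signedArea, configP]
  ring_nf
  norm_num

theorem sqAreaMultiset_configQ : sqAreaMultiset configQ = {2592, 288, 1800, 72} := by
  simp [sqAreaMultiset_fin_four, signedArea, configQ]
  ring_nf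
  norm_num

theorem stmt19 (P Q : Fin 4 → EuclideanSpace ℝ (Fin 2))
    (hP : P = ![!₂[0,0], !₂[0,6], !₂[6 * Real.sqrt 2, 0], !₂[2 * Real.sqrt 2, -1]])
    (hQ : Q = ![!₂[0,0], !₂[0,6], !₂[6 * Real.sqrt 2, 0], !₂[2 * Real.sqrt 2, 5]]) :
    sqDistMultiset P = sqDistMultiset Q ∧
    sqAreaMultiset P = sqAreaMultiset Q ∧
    ¬ ∃ (g : EuclideanSpace ℝ (Fin 2) ≃ᵢ EuclideanSpace ℝ (Fin 2))
        (π : Equiv.Perm (Fin 4)), ∀ i, g (P (π i)) = Q i := by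
  obtain rfl : P = configP := hP
  obtain rfl : Q = configQ := hQ
  refine ⟨?_, ?_, ?_⟩
  · rw [sqDistMultiset_eq_map_natCast _ _ dist_configP_sq,
      sqDistMultiset_eq_map_natCast _ _ dist_configQ_sq]
    exact congrArg _ (by decide)
  · rw [sqAreaMultiset_configP, sqAreaMultiset_configQ, Multiset.pair_comm]
  · refine not_exists_isometry_perm_of_forall_exists_dist_ne _ _ 0 fun a => ?_
    obtain ⟨j, hj⟩ : ∃ j, ∀ b, sqDistTableP a b ≠ sqDistTableQ 0 j := by
      revert a
      decide
    refine ⟨j, fun b hb => hj b ?_⟩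
    have hb_sq := congrArg (· ^ 2) hb
    simp only [dist_configP_sq, dist_configQ_sq] at hb_sq
    exact_mod_cast hb_sq
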